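/- Let m be a natural number, let u, v : Fin m → ℝ be linearly independent and let u', v' : Fin m → ℝ be linearly independent. Set B i j = u i * v j − v i * u j and B' i j = u' i * v' j − v' i * u' j. Then the full antisymmetrization over all four indices of (i,j,k,l) ↦ B i j * B' k l vanishes for all i,j,k,l (the condition B_{[ij}B'_{kl]} = 0) if and only if the 2-planes intersect nontrivially: span{u,v} ∩ span{u',v'} ≠ {0}. -/

import Mathlib

/-!
Both sides are equivalent to the linear dependence of `u, v, u', v'`. Expanding the two
wedges, each of the four resulting terms antisymmetrizes to `± 1/24` times the `4 × 4`
minor `det [u v u' v']` on the rows `i, j, k, l`, and the signs agree, so the Plücker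
expression is `1/6` of that minor. The minors all vanish iff the four columns are dependent,
and since each pair is independent, a dependence relation is exactly a nonzero vector common
to both planes.
-/

open Finset

/-- Full antisymmetrization of a 4-index expression over all four index slots. -/
noncomputable def alt4 {m : ℕ} (T : Fin m → Fin m → Fin m → Fin m → ℝ)
    (i j k l : Fin m) : ℝ :=
  (1 / 24 : ℝ) * ∑ σ : Equiv.Perm (Fin 4),
    ((Equiv.Perm.sign σ : ℤ) : ℝ) *
      T (![i, j, k, l] (σ 0)) (![i, j, k, l] (σ 1)) (![i, j, k, l] (σ 2)) (![i, j, k, l] (σ 3))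

/-- The simple bivector `(u∧v) i j = u i * v j − v i * u j`. -/
noncomputable def wedge {m : ℕ} (u v : Fin m → ℝ) : Fin m → Fin m → ℝ :=
  fun i j => u i * v j - v i * u j

namespace Matrix

variable {m n K : Type*} [Fintype m] [Fintype n] [Field K]

theorem sum_sign_mul_prod_eq_sign_mul_det {ι R : Type*} [DecidableEq n] [CommRing R]
    (w : n → ι → R) (x : n → ι) (τ : Equiv.Perm n) :
    ∑ σ : Equiv.Perm n, (Equiv.Perm.sign σ : R) * ∏ p, w (τ p) (x (σ p)) =
      Equiv.Perm.sign τ * (of fun c p => w p (x c)).det := by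
  rw [← det_permute', det_apply']
  rfl

theorem span_row_eq_top_of_linearIndependent_col {A : Matrix m n K}
    (h : LinearIndependent K A.col) : Submodule.span K (Set.range A.row) = ⊤ := by
  apply Submodule.eq_top_of_finrank_eq
  rw [← rank_eq_finrank_span_row, rank_eq_finrank_span_cols, ← Set.finrank,
    ← linearIndependent_iff_card_eq_finrank_span.mp h, Module.finrank_fintype_fun_eq_card]

theorem linearIndependent_col_iff_exists_det_submatrix_ne_zero [DecidableEq n]
    {A : Matrix m n K} :
    LinearIndependent K A.col ↔ ∃ e : n → m, (A.submatrix e id).det ≠ 0 := by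
  constructor
  · intro h
    obtain ⟨κ, a, -, hspan, hli⟩ := exists_linearIndependent' K A.row
    rw [span_row_eq_top_of_linearIndependent_col h] at hspan
    let e := (Module.Basis.mk hli hspan.ge).indexEquiv (Pi.basisFun K n)
    refine ⟨a ∘ e.symm, ?_⟩
    rw [← isUnit_iff_ne_zero, ← isUnit_iff_isUnit_det, ← linearIndependent_rows_iff_isUnit]
    exact hli.comp e.symm e.symm.injective
  · rintro ⟨e, he⟩
    rw [← isUnit_iff_ne_zero, ← isUnit_iff_isUnit_det, ← linearIndependent_cols_iff_isUnit] at he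
    exact he.of_comp (LinearMap.funLeft K K e)

end Matrix

theorem linearIndependent_fin_append_iff {R M : Type*} [Ring R] [AddCommGroup M] [Module R M]
    {k l : ℕ} {a : Fin k → M} {b : Fin l → M} :
    LinearIndependent R (Fin.append a b) ↔ LinearIndependent R a ∧ LinearIndependent R b ∧
      Disjoint (Submodule.span R (Set.range a)) (Submodule.span R (Set.range b)) := by
  have hl : Fin.append a b ∘ finSumFinEquiv ∘ Sum.inl = a := funext (Fin.append_left a b)
  have hr : Fin.append a b ∘ finSumFinEquiv ∘ Sum.inr = b := funext (Fin.append_right a b)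
  rw [← linearIndependent_equiv finSumFinEquiv, linearIndependent_sum, Function.comp_assoc,
    Function.comp_assoc, hl, hr]

theorem alt4_wedge_mul_wedge {m : ℕ} (u v u' v' : Fin m → ℝ) (i j k l : Fin m) :
    alt4 (fun i j k l => wedge u v i j * wedge u' v' k l) i j k l =
      1 / 6 * (Matrix.of fun c p => ![u, v, u', v'] p (![i, j, k, l] c)).det := by
  let D (τ : Equiv.Perm (Fin 4)) : ℝ := ∑ σ : Equiv.Perm (Fin 4),
    (Equiv.Perm.sign σ : ℝ) * ∏ p, ![u, v, u', v'] (τ p) (![i, j, k, l] (σ p))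
  have hD := Matrix.sum_sign_mul_prod_eq_sign_mul_det ![u, v, u', v'] ![i, j, k, l]
  calc alt4 (fun i j k l => wedge u v i j * wedge u' v' k l) i j k l
      = 1 / 24 * (D 1 - D (Equiv.swap 0 1) - D (Equiv.swap 2 3)
          + D (Equiv.swap 0 1 * Equiv.swap 2 3)) := by
        simp only [alt4, wedge, D, ← sum_sub_distrib, ← sum_add_distrib, Fin.prod_univ_four]
        congr 1
        refine sum_congr rfl fun σ _ => ?_
        simp only [Equiv.Perm.coe_one, Equiv.Perm.coe_mul, id_eq, Function.comp_apply,
          Equiv.swap_apply_left, Equiv.swap_apply_right, Equiv.swap_apply_of_ne_of_ne, ne_eq,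
          Fin.reduceEq, not_false_eq_true, Matrix.cons_val]
        ring
    _ = _ := by
        simp only [D, hD, Equiv.Perm.sign_mul, Equiv.Perm.sign_swap (by decide : (0 : Fin 4) ≠ 1),
          Equiv.Perm.sign_swap (by decide : (2 : Fin 4) ≠ 3), Equiv.Perm.sign_one]
        push_cast
        ring

/-- For simple bivectors `B = u∧v`, `B' = u'∧v'` built from linearly independent pairs,
the Plucker condition `B_{[ij}B'_{kl]} = 0` holds iff the two 2-planes intersect
nontrivially. -/
theorem plucker_iff_planes_intersect (m : ℕ) (u v u' v' : Fin m → ℝ)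
    (huv : LinearIndependent ℝ ![u, v]) (huv' : LinearIndependent ℝ ![u', v']) :
    (∀ i j k l, alt4 (fun i j k l => wedge u v i j * wedge u' v' k l) i j k l = 0) ↔
    Submodule.span ℝ {u, v} ⊓ Submodule.span ℝ {u', v'} ≠ ⊥ := by
  let A : Matrix (Fin m) (Fin 4) ℝ := Matrix.of fun i p => ![u, v, u', v'] p i
  have hcol : A.col = Fin.append ![u, v] ![u', v'] := by
    funext p; fin_cases p <;> rfl
  calc (∀ i j k l, alt4 (fun i j k l => wedge u v i j * wedge u' v' k l) i j k l = 0)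
      ↔ ∀ x : Fin 4 → Fin m, (A.submatrix x id).det = 0 := by
        simp only [alt4_wedge_mul_wedge, one_div, mul_eq_zero, inv_eq_zero,
          OfNat.ofNat_ne_zero, false_or, Fin.forall_fin_succ_pi, Fin.forall_fin_zero_pi]
        rfl
    _ ↔ ¬ LinearIndependent ℝ A.col := by
        rw [Matrix.linearIndependent_col_iff_exists_det_submatrix_ne_zero]
        simp only [not_exists, not_not]
    _ ↔ _ := by
        rw [hcol, linearIndependent_fin_append_iff, Matrix.range_cons_cons_empty,
          Matrix.range_cons_cons_empty, disjoint_iff]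
        simp only [huv, huv', true_and]
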